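/- There exists L₀ = L₀(β, ψ) > 0 such that for all L ≥ L₀, all k ∈ ℕ, and all 0 < ε < L^{−max{k−1, 1/2} − β}, the following holds. Let 1 ≤ l ≤ k, let ω ∈ Ω be any sample, let J₀ be a connected component of B(−(l+β)/2), and let x̂ be the unique point of C'_ψ contained in J₀. Then for every 1 ≤ i ≤ l, f^i_ω(J₀) ⊆ {y ∈ S¹ : d(y, f^i(x̂)) ≤ L^{−β/2}}. -/

import Mathlib

open MeasureTheory Set Filter Topology

noncomputable section

/-! ## Basic circle setup.
We parametrize `S¹ = ℝ/ℤ` by `[0,1)`.  Functions and subsets of `S¹` are represented by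
1-periodic functions/subsets of `ℝ`. -/

/-- The circle distance on `ℝ/ℤ`, computed on representatives. -/
def dS1 (x y : ℝ) : ℝ := |x - y - (round (x - y) : ℝ)|

/-- Circle distance from a point to a set (a subset of `ℝ`, viewed 1-periodically). -/
def dS1Set (x : ℝ) (A : Set ℝ) : ℝ := sInf (dS1 x '' A)

/-- The critical set `C'_ψ = {ψ' = 0}` as a subset of `ℝ`. -/
def Crit (ψ : ℝ → ℝ) : Set ℝ := {x : ℝ | deriv ψ x = 0}

/-- (H1): the critical set is finite (as a subset of `S¹ ≅ [0,1)`). -/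
def H1 (ψ : ℝ → ℝ) : Prop := (Crit ψ ∩ Ico (0:ℝ) 1).Finite

/-- (H2): no degenerate critical points. -/
def H2 (ψ : ℝ → ℝ) : Prop := ∀ x ∈ Crit ψ, deriv (deriv ψ) x ≠ 0

/-- (H4): `‖ψ'‖_{C⁰} ≤ 1/10` and `‖ψ''‖_{C⁰} ≤ 1/10`. -/
def H4 (ψ : ℝ → ℝ) : Prop :=
  (∀ x : ℝ, |deriv ψ x| ≤ 1 / 10) ∧ ∀ x : ℝ, |deriv (deriv ψ) x| ≤ 1 / 10

/-- Standing assumptions on `ψ`: 1-periodicity, `C²` smoothness, (H1), (H2). -/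
def PsiReg (ψ : ℝ → ℝ) : Prop :=
  Function.Periodic ψ 1 ∧ ContDiff ℝ 2 ψ ∧ H1 ψ ∧ H2 ψ

/-- The constant `K₁ = K₁(ψ)` with `|ψ'(x)| ≥ K₁ d(x, C'_ψ)`. -/
def K1hyp (ψ : ℝ → ℝ) (K₁ : ℝ) : Prop :=
  0 < K₁ ∧ ∀ x : ℝ, K₁ * dS1Set x (Crit ψ) ≤ |deriv ψ x|

/-- `‖ψ''‖_{C⁰}`. -/
def psiC2norm (ψ : ℝ → ℝ) : ℝ := ⨆ x : ℝ, |deriv (deriv ψ) x|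

/-- The circle map `f = f_{L,a} = Lψ + a (mod 1)`, on representatives in `[0,1)`. -/
def cmap (ψ : ℝ → ℝ) (L a x : ℝ) : ℝ := Int.fract (L * ψ x + a)

/-- The random orbit `X_{n+1} = f_{ω_n}(X_n) = f(X_n + ω_n)` on `S¹ ≅ [0,1)`;
`orbitW ψ L a ω x n = fⁿ_ω(x)`. -/
def orbitW (ψ : ℝ → ℝ) (L a : ℝ) (ω : ℕ → ℝ) (x : ℝ) : ℕ → ℝ
  | 0 => x
  | n + 1 => cmap ψ L a (orbitW ψ L a ω x n + ω n)

/-- Deterministic iterates `fⁿ(x)`. -/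
def detIter (ψ : ℝ → ℝ) (L a x : ℝ) (n : ℕ) : ℝ := orbitW ψ L a (fun _ => 0) x n

/-- Condition `(H3)_{c,k}`: `d(fˡ(x̂), C'_ψ) ≥ c` for all `x̂ ∈ C'_ψ` and `1 ≤ l ≤ k`. -/
def H3cond (ψ : ℝ → ℝ) (L a c : ℝ) (k : ℕ) : Prop :=
  ∀ x ∈ Crit ψ, ∀ l : ℕ, 1 ≤ l → l ≤ k → c ≤ dS1Set (detIter ψ L a x l) (Crit ψ)

/-- The lifted random orbit `X̃_{n+1} = f̃(X̃_n + ω_n) = Lψ(X̃_n + ω_n) + a` on `ℝ`;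
`liftOrbit ψ L a ω x n = f̃ⁿ_ω(x)`. -/
def liftOrbit (ψ : ℝ → ℝ) (L a : ℝ) (ω : ℕ → ℝ) (x : ℝ) : ℕ → ℝ
  | 0 => x
  | n + 1 => L * ψ (liftOrbit ψ L a ω x n + ω n) + a

/-- `|(fⁿ_ω)'(x)|`, computed by the chain rule (the mod-1 projection has derivative 1). -/
def derivAbs (ψ : ℝ → ℝ) (L a : ℝ) (ω : ℕ → ℝ) (x : ℝ) (n : ℕ) : ℝ :=
  ∏ i ∈ Finset.range n, |L * deriv ψ (orbitW ψ L a ω x i + ω i)|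

/-- `log |(fⁿ_ω)'(x)|`. -/
def logDerivSum (ψ : ℝ → ℝ) (L a : ℝ) (ω : ℕ → ℝ) (x : ℝ) (n : ℕ) : ℝ :=
  ∑ i ∈ Finset.range n, Real.log |L * deriv ψ (orbitW ψ L a ω x i + ω i)|

/-- `log |(f̃ⁿ_ω)'(x)|` along the lifted orbit. -/
def logDerivSumLift (ψ : ℝ → ℝ) (L a : ℝ) (ω : ℕ → ℝ) (x : ℝ) (n : ℕ) : ℝ :=
  ∑ i ∈ Finset.range n, Real.log |L * deriv ψ (liftOrbit ψ L a ω x i + ω i)|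

/-- The (signed) derivative `(f̃ⁿ_ω)'(x)` of the lifted composition. -/
def derivLift (ψ : ℝ → ℝ) (L a : ℝ) (ω : ℕ → ℝ) (x : ℝ) (n : ℕ) : ℝ :=
  ∏ i ∈ Finset.range n, (L * deriv ψ (liftOrbit ψ L a ω x i + ω i))

/-- The uniform distribution `ν^ε` on `[-ε, ε]`. -/
def unif (ε : ℝ) : Measure ℝ :=
  ENNReal.ofReal (1 / (2 * ε)) • volume.restrict (Icc (-ε) ε)

/-- `P = ν^{⊗ ℕ}`: the coordinates of `ω` are i.i.d. with law `ν` under `P`. -/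
def IsProductOf (P : Measure (ℕ → ℝ)) (ν : Measure ℝ) : Prop :=
  IsProbabilityMeasure P ∧
    ∀ (s : Finset ℕ) (A : ℕ → Set ℝ), (∀ i, MeasurableSet (A i)) →
      P {ω : ℕ → ℝ | ∀ i ∈ s, ω i ∈ A i} = ∏ i ∈ s, ν (A i)

/-- A stationary probability measure for the Markov chain `X_{n+1} = f(X_n + ω_n)` on
`S¹ ≅ [0,1)`. -/
def IsStationaryCircle (ψ : ℝ → ℝ) (L a ε : ℝ) (μ : Measure ℝ) : Prop :=
  IsProbabilityMeasure μ ∧ μ (Ico (0:ℝ) 1) = 1 ∧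
    ∀ A : Set ℝ, MeasurableSet A →
      μ A = ∫⁻ x, unif ε {w : ℝ | cmap ψ L a (x + w) ∈ A} ∂μ

/-- `μ` is supported on all of `S¹`. -/
def FullSupport (μ : Measure ℝ) : Prop :=
  ∀ U : Set ℝ, IsOpen U → (U ∩ Ico (0:ℝ) 1).Nonempty → 0 < μ U

/-- The neighborhood `B(η) = {x : d(x, C'_ψ) ≤ K₁⁻¹ L^η}` of the critical set. -/
def Bset (ψ : ℝ → ℝ) (K₁ L η : ℝ) : Set ℝ := {x : ℝ | dS1Set x (Crit ψ) ≤ K₁⁻¹ * L ^ η}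

/-- `G = S¹ ∖ B(-β)`. -/
def Gset (ψ : ℝ → ℝ) (K₁ L β : ℝ) : Set ℝ := (Bset ψ K₁ L (-β))ᶜ

/-- `B^l` for `0 ≤ l ≤ k` (`B⁰ = I`). -/
def BlSet (ψ : ℝ → ℝ) (K₁ L β : ℝ) (k l : ℕ) : Set ℝ :=
  if l = k then Bset ψ K₁ L (-(k : ℝ) / 2 - β)
  else Bset ψ K₁ L (-(l : ℝ) / 2 - β) \ Bset ψ K₁ L (-((l : ℝ) + 1) / 2 - β)

/-- The shifted set `A_w = A - w`. -/
def shiftSet (A : Set ℝ) (w : ℝ) : Set ℝ := {x : ℝ | x + w ∈ A}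
/-! ## The partition `R` into connected components of `G, B⁰, …, B^k`. -/

open scoped Classical in
/-- The element of `{G, B⁰, …, B^k}` containing `x`. -/
def pieceOf (ψ : ℝ → ℝ) (K₁ L β : ℝ) (k : ℕ) (x : ℝ) : Set ℝ :=
  if x ∈ Gset ψ K₁ L β then Gset ψ K₁ L β
  else if h : ∃ l : ℕ, l ≤ k ∧ x ∈ BlSet ψ K₁ L β k l then BlSet ψ K₁ L β k h.choose
  else ∅

/-- The atom of the partition `R` containing `x`: the connected component of the piece of
`{G, B⁰, …, B^k}` containing `x`. -/
def atomR (ψ : ℝ → ℝ) (K₁ L β : ℝ) (k : ℕ) (x : ℝ) : Set ℝ :=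
  connectedComponentIn (pieceOf ψ K₁ L β k x) x

/-- Length of a subset of `ℝ`. -/
def sLen (S : Set ℝ) : ℝ := (volume S).toReal

/-- The atom of the shifted partition `R_w` containing `z`. -/
def atomRshift (ψ : ℝ → ℝ) (K₁ L β : ℝ) (k : ℕ) (w z : ℝ) : Set ℝ :=
  {t : ℝ | t + w ∈ atomR ψ K₁ L β k (z + w)}

/-- `J` is a longest atom of `R_w` restricted to `Jbar`. -/
def IsLongestAtom (ψ : ℝ → ℝ) (K₁ L β : ℝ) (k : ℕ) (w : ℝ) (Jbar J : Set ℝ) : Prop :=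
  (∃ z ∈ Jbar, J = atomRshift ψ K₁ L β k w z ∩ Jbar) ∧
    ∀ z ∈ Jbar, sLen (atomRshift ψ K₁ L β k w z ∩ Jbar) ≤ sLen J

/-- The random interval process `(J_i, J̄_i)` of Section 3.2:
`J₀ = X₀ + [-ε,ε]`, `J̄₁ = f̃(J₀)`, and for `i ≥ 1`, `J_i` is a longest atom of `R_{ω_i}|_{J̄_i}`
and `J̄_{i+1} = f̃_{ω_i}(J_i)`. -/
def IntervalProc (ψ : ℝ → ℝ) (L a K₁ β ε : ℝ) (k : ℕ) (X₀ : ℝ) (ω : ℕ → ℝ)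
    (J Jbar : ℕ → Set ℝ) : Prop :=
  J 0 = Icc (X₀ - ε) (X₀ + ε) ∧
    Jbar 1 = (fun x : ℝ => L * ψ x + a) '' J 0 ∧
    ∀ i : ℕ, 1 ≤ i →
      IsLongestAtom ψ K₁ L β k (ω i) (Jbar i) (J i) ∧
        Jbar (i + 1) = (fun x : ℝ => L * ψ (x + ω i) + a) '' J i

/-! ## The partition `𝒫` of Section 4.1 and the merged partitions `𝒫_ω(I)`. -/

/-- A partition `𝒫` of `S¹` (regarded 1-periodically on `ℝ`) as in Section 4.1(A):
atoms are intervals subordinate to `{G, B⁰, …, B^k}`; on `G` and `B^k` the atoms are the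
connected components, and each component of `B^l` (`l < k`) is divided into intervals of
length in `[(l+1)⁻² L^{-(l+3)/2-β}, 2(l+1)⁻² L^{-(l+3)/2-β}]`. -/
structure GoodPartition (ψ : ℝ → ℝ) (K₁ L β : ℝ) (k : ℕ) (PP : Set (Set ℝ)) : Prop where
  nonempty : ∀ C ∈ PP, C.Nonempty
  interval : ∀ C ∈ PP, C.OrdConnected
  disj : PP.PairwiseDisjoint id
  cover : ⋃₀ PP = univ
  periodic : ∀ C ∈ PP, (fun x : ℝ => x + 1) '' C ∈ PP
  subordinate : ∀ C ∈ PP, C ⊆ Gset ψ K₁ L β ∨ ∃ l ≤ k, C ⊆ BlSet ψ K₁ L β k l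
  g_atoms : ∀ C ∈ PP, C ⊆ Gset ψ K₁ L β → ∀ x ∈ C,
    C = connectedComponentIn (Gset ψ K₁ L β) x
  bk_atoms : ∀ C ∈ PP, C ⊆ BlSet ψ K₁ L β k k → ∀ x ∈ C,
    C = connectedComponentIn (BlSet ψ K₁ L β k k) x
  bl_len : ∀ C ∈ PP, ∀ l : ℕ, l < k → C ⊆ BlSet ψ K₁ L β k l →
    (((l : ℝ) + 1) ^ 2)⁻¹ * L ^ (-((l : ℝ) + 3) / 2 - β) ≤ sLen C ∧
      sLen C ≤ 2 * (((l : ℝ) + 1) ^ 2)⁻¹ * L ^ (-((l : ℝ) + 3) / 2 - β)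

/-- The non-singleton atoms of the shifted partition `𝒫_w` restricted to `I`. -/
def restAtoms (PP : Set (Set ℝ)) (w : ℝ) (I : Set ℝ) : Set (Set ℝ) :=
  {A : Set ℝ | (∃ C ∈ PP, A = ((fun x : ℝ => x - w) '' C) ∩ I) ∧ A.Nontrivial}

/-- `A` lies (weakly) to the left of `B`. -/
def setBefore (A B : Set ℝ) : Prop := ∀ a ∈ A, ∀ b ∈ B, a ≤ b

/-- `A` is one of the two leftmost members of `𝒜`. -/
def TwoLeft (𝒜 : Set (Set ℝ)) (A : Set ℝ) : Prop :=
  A ∈ 𝒜 ∧ {B ∈ 𝒜 | B ≠ A ∧ setBefore B A}.Subsingleton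

/-- `A` is one of the two rightmost members of `𝒜`. -/
def TwoRight (𝒜 : Set (Set ℝ)) (A : Set ℝ) : Prop :=
  A ∈ 𝒜 ∧ {B ∈ 𝒜 | B ≠ A ∧ setBefore A B}.Subsingleton

/-- `𝒜` has at least four members. -/
def AtLeastFour (𝒜 : Set (Set ℝ)) : Prop :=
  ∃ s : Finset (Set ℝ), ↑s ⊆ 𝒜 ∧ s.card = 4

/-- `S` is an atom of the merged partition `𝒫_w(I)` (whose atoms `𝒜 = restAtoms PP w I`
are merged at the two ends, and which is trivial if `N ≤ 3`). -/
def MergedAtom (𝒜 : Set (Set ℝ)) (I S : Set ℝ) : Prop :=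
  (¬ AtLeastFour 𝒜 ∧ S = I) ∨
    (AtLeastFour 𝒜 ∧
      ((∃ A B : Set ℝ, A ∈ 𝒜 ∧ B ∈ 𝒜 ∧ A ≠ B ∧ TwoLeft 𝒜 A ∧ TwoLeft 𝒜 B ∧ S = A ∪ B) ∨
        (∃ A B : Set ℝ, A ∈ 𝒜 ∧ B ∈ 𝒜 ∧ A ≠ B ∧ TwoRight 𝒜 A ∧ TwoRight 𝒜 B ∧ S = A ∪ B) ∨
        (S ∈ 𝒜 ∧ ¬ TwoLeft 𝒜 S ∧ ¬ TwoRight 𝒜 S)))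

/-! ## Itineraries (Section 4.1(B),(C)). -/

/-- The image `f̃ʲ_ω(A)`. -/
def Fim (ψ : ℝ → ℝ) (L a : ℝ) (ω : ℕ → ℝ) (j : ℕ) (A : Set ℝ) : Set ℝ :=
  (fun x : ℝ => liftOrbit ψ L a ω x j) '' A

/-- `C 0 ⊇ C 1 ⊇ ⋯ ⊇ C n` is a chain of itinerary atoms: `C i ∈ 𝒬_i` for `i ≤ n`. -/
def AtomChain (ψ : ℝ → ℝ) (L a : ℝ) (PP : Set (Set ℝ)) (ω : ℕ → ℝ) (I : Set ℝ)
    (n : ℕ) (C : ℕ → Set ℝ) : Prop :=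
  MergedAtom (restAtoms PP (ω 0) I) I (C 0) ∧
    ∀ i : ℕ, i < n →
      ∃ S : Set ℝ,
        MergedAtom (restAtoms PP (ω (i + 1)) (Fim ψ L a ω (i + 1) (C i)))
            (Fim ψ L a ω (i + 1) (C i)) S ∧
          C (i + 1) = C i ∩ (fun x : ℝ => liftOrbit ψ L a ω x (i + 1)) ⁻¹' S

/-- `τ ≥ n` on the chain `C`: no near-visit to `B^k` before time `n`. -/
def ChainTauGE (ψ : ℝ → ℝ) (K₁ L a β : ℝ) (k : ℕ) (ω : ℕ → ℝ) (C : ℕ → Set ℝ)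
    (n : ℕ) : Prop :=
  ∀ i : ℕ, i < n → Fim ψ L a ω i (C i) ∩ shiftSet (BlSet ψ K₁ L β k k) (ω i) = ∅

/-- The chain `C` is bound at time `t`: `t ∈ [t_j + 1, t_j + p_j]` for some bound period. -/
def ChainBoundAt (ψ : ℝ → ℝ) (K₁ L a β : ℝ) (k : ℕ) (ω : ℕ → ℝ) (C : ℕ → Set ℝ)
    (t : ℕ) : Prop :=
  ∃ s : ℕ, s < t ∧ ∃ l : ℕ, 1 ≤ l ∧ l ≤ k ∧
    (Fim ψ L a ω s (C s) ∩ shiftSet (BlSet ψ K₁ L β k l) (ω s)).Nonempty ∧ t ≤ s + l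

/-! ## The supporting interval process `(I_n)` of Section 5.1. -/

open scoped Classical in
/-- The shift used when mapping `I_n` forward: `0` if `I_n` is a fresh noise interval
(`n = 0` or `n - 1` was a near-visit to `B^k`), and `ω_n` otherwise. -/
def stepShift (ψ : ℝ → ℝ) (K₁ L β : ℝ) (k : ℕ) (ω : ℕ → ℝ) (I : ℕ → Set ℝ) : ℕ → ℝ
  | 0 => 0
  | n + 1 =>
    if (I n ∩ shiftSet (BlSet ψ K₁ L β k k) (ω n)).Nonempty then 0 else ω (n + 1)

/-- The supporting interval process `(I_n)` of Section 5.1: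
`I₀ = X̃₀ + [-ε,ε]`; if `I_n` meets `B^k_{ω_n}` then `I_{n+1} = X̃_{n+1} + [-ε,ε]`, and
otherwise `I_{n+1}` is the atom of `𝒫_{ω_{n+1}}(f̃_{(·)}(I_n))` containing `X̃_{n+1}`. -/
def SuppProc (ψ : ℝ → ℝ) (L a K₁ β ε : ℝ) (k : ℕ) (PP : Set (Set ℝ)) (X₀ : ℝ)
    (ω : ℕ → ℝ) (I : ℕ → Set ℝ) : Prop :=
  I 0 = Icc (X₀ - ε) (X₀ + ε) ∧
    ∀ n : ℕ,
      ((I n ∩ shiftSet (BlSet ψ K₁ L β k k) (ω n)).Nonempty →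
          I (n + 1) =
            Icc (liftOrbit ψ L a ω X₀ (n + 1) - ε) (liftOrbit ψ L a ω X₀ (n + 1) + ε)) ∧
      (¬ (I n ∩ shiftSet (BlSet ψ K₁ L β k k) (ω n)).Nonempty →
          MergedAtom
              (restAtoms PP (ω (n + 1))
                ((fun x : ℝ => L * ψ (x + stepShift ψ K₁ L β k ω I n) + a) '' I n))
              ((fun x : ℝ => L * ψ (x + stepShift ψ K₁ L β k ω I n) + a) '' I n)
              (I (n + 1)) ∧
            liftOrbit ψ L a ω X₀ (n + 1) ∈ I (n + 1))

/-- `τ_j = m` for the supporting interval process: `I_m` meets `B^k_{ω_m}`, `m ≥ 1`, and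
exactly `j - 1` earlier positive times do so. -/
def TauEq (ψ : ℝ → ℝ) (K₁ L β : ℝ) (k : ℕ) (ω : ℕ → ℝ) (I : ℕ → Set ℝ)
    (j m : ℕ) : Prop :=
  0 < m ∧ (I m ∩ shiftSet (BlSet ψ K₁ L β k k) (ω m)).Nonempty ∧
    ∃ s : Finset ℕ,
      (∀ i : ℕ, i ∈ s ↔
        (0 < i ∧ i < m ∧ (I i ∩ shiftSet (BlSet ψ K₁ L β k k) (ω i)).Nonempty)) ∧
      s.card = j - 1

/-! Let `r = K₁⁻¹ L^{-(l+β)/2}`. Critical points are uniformly separated on `S¹` and `r → 0`,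
so the points at distance `2r` from `x̂` lie outside `B(-(l+β)/2)` and `J₀` has radius at most
`2r`. Since `x̂` is critical, the first step squares distances:
`d(f_ω(y), f(x̂)) ≤ (L/10)(2r + ε)²`; afterwards each step expands them by at most `L/10`, up to
the noise `ε`. Hence `d(f^i_ω(y), f^i(x̂)) ≤ L^{l-1}((L/10)(2r + ε)² + ε) = O(L^{-β})`, which the
bound on `ε` and `L ≥ L₀` bring below `L^{-β/2}`. -/

lemma dS1_eq_dist (x y : ℝ) : dS1 x y = dist (x : AddCircle (1 : ℝ)) y := by
  rw [dist_eq_norm, ← AddCircle.coe_sub, UnitAddCircle.norm_eq, dS1]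

lemma dS1_nonneg (x y : ℝ) : 0 ≤ dS1 x y := abs_nonneg _

lemma dS1_comm (x y : ℝ) : dS1 x y = dS1 y x := by
  simp only [dS1_eq_dist, dist_comm]

lemma dS1_triangle (x y z : ℝ) : dS1 x z ≤ dS1 x y + dS1 y z := by
  simp only [dS1_eq_dist]
  exact dist_triangle _ _ _

lemma dS1_le_abs_sub (x y : ℝ) : dS1 x y ≤ |x - y| := by
  simpa [dS1] using round_le (x - y) 0

lemma dS1_fract_left (x y : ℝ) : dS1 (Int.fract x) y = dS1 x y := by
  simp only [dS1_eq_dist, AddCircle.coe_fract]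

lemma dS1_add_left_le (x y w : ℝ) : dS1 (x + w) y ≤ dS1 x y + |w| := by
  calc dS1 (x + w) y ≤ dS1 (x + w) x + dS1 x y := dS1_triangle _ _ _
    _ ≤ |w| + dS1 x y := by
        gcongr
        simpa using dS1_le_abs_sub (x + w) x
    _ = dS1 x y + |w| := add_comm _ _

lemma dS1_add_self {s : ℝ} (hs : |s| ≤ 1 / 2) (x : ℝ) : dS1 (x + s) x = |s| := by
  rw [dS1_eq_dist, dist_eq_norm, ← AddCircle.coe_sub, add_sub_cancel_left,
    AddCircle.norm_coe_eq_abs_iff _ one_ne_zero, abs_one]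
  exact hs

lemma Set.Finite.exists_pos_le_dist {X : Type*} [MetricSpace X] {s : Set X} (hs : s.Finite) :
    ∃ δ > 0, ∀ x ∈ s, ∀ y ∈ s, x ≠ y → δ ≤ dist x y := by
  rcases s.offDiag.eq_empty_or_nonempty with h | h
  · refine ⟨1, one_pos, fun x hx y hy hxy => ?_⟩
    have hxy' : (x, y) ∈ s.offDiag := ⟨hx, hy, hxy⟩
    simp [h] at hxy'
  · obtain ⟨p, hp, hmin⟩ := Set.exists_min_image _ (fun p : X × X => dist p.1 p.2) hs.offDiag h
    exact ⟨_, dist_pos.2 hp.2.2, fun x hx y hy hxy => hmin (x, y) ⟨hx, hy, hxy⟩⟩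

lemma Function.Periodic.deriv {f : ℝ → ℝ} {p : ℝ} (hf : Function.Periodic f p) :
    Function.Periodic (deriv f) p := by
  intro x
  rw [← deriv_comp_add_const, hf.funext]

def CritSeparated (ψ : ℝ → ℝ) (δ : ℝ) : Prop :=
  ∀ c ∈ Crit ψ, ∀ c' ∈ Crit ψ, dS1 c c' = 0 ∨ δ ≤ dS1 c c'

lemma exists_critSeparated {ψ : ℝ → ℝ} (hper : Function.Periodic (deriv ψ) 1) (hfin : H1 ψ) :
    ∃ δ > 0, CritSeparated ψ δ := by
  have himage : ((↑) : ℝ → AddCircle (1 : ℝ)) '' Crit ψ = (↑) '' (Crit ψ ∩ Ico 0 1) := by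
    refine Subset.antisymm ?_ (image_mono inter_subset_left)
    rintro _ ⟨c, hc, rfl⟩
    refine ⟨Int.fract c, ⟨?_, Int.fract_nonneg c, Int.fract_lt_one c⟩, AddCircle.coe_fract c⟩
    have := (hper.int_mul (-⌊c⌋)) c
    change deriv ψ c = 0 at hc
    change deriv ψ _ = 0
    rw [Int.fract, sub_eq_add_neg, ← Int.cast_neg, ← mul_one ((-⌊c⌋ : ℤ) : ℝ), this, hc]
  obtain ⟨δ, hδ, hsep⟩ :=
    (himage ▸ hfin.image ((↑) : ℝ → AddCircle (1 : ℝ))).exists_pos_le_dist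
  refine ⟨δ, hδ, fun c hc c' hc' => ?_⟩
  rw [dS1_eq_dist, dist_eq_zero]
  exact (eq_or_ne _ _).imp_right (hsep _ (mem_image_of_mem _ hc) _ (mem_image_of_mem _ hc'))

lemma connectedComponentIn_subset_Icc {s : Set ℝ} {x r : ℝ} (hr : 0 ≤ r)
    (hleft : x - r ∉ s) (hright : x + r ∉ s) :
    connectedComponentIn s x ⊆ Icc (x - r) (x + r) := by
  intro y hy
  have hx : x ∈ connectedComponentIn s x :=
    mem_connectedComponentIn (connectedComponentIn_nonempty_iff.1 ⟨y, hy⟩)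
  have hord := (isPreconnected_connectedComponentIn (F := s) (x := x)).ordConnected
  by_contra hy'
  rcases not_and_or.1 hy' with h | h
  · exact hleft <| connectedComponentIn_subset _ _ <|
      hord.out hy hx ⟨(not_le.1 h).le, by linarith⟩
  · exact hright <| connectedComponentIn_subset _ _ <|
      hord.out hx hy ⟨by linarith, (not_le.1 h).le⟩

section CriticalNeighbourhood

variable {ψ : ℝ → ℝ} {δ : ℝ}

lemma lt_dS1Set_crit (hsep : CritSeparated ψ δ) {xh t r : ℝ} (hxh : xh ∈ Crit ψ) (hr : 0 < r)
    (hδ : 3 * r < δ) (ht : dS1 t xh = 2 * r) : r < dS1Set t (Crit ψ) := by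
  refine (lt_min (by linarith) (by linarith) : r < min (2 * r) (δ - 2 * r)).trans_le ?_
  refine le_csInf ⟨_, mem_image_of_mem _ hxh⟩ ?_
  rintro _ ⟨c, hc, rfl⟩
  rcases hsep c hc xh hxh with h | h
  · have := dS1_triangle t c xh
    exact (min_le_left _ _).trans (by linarith)
  · have := dS1_triangle c t xh
    rw [dS1_comm c t] at this
    exact (min_le_right _ _).trans (by linarith)

lemma connectedComponentIn_Bset_subset_Icc (hsep : CritSeparated ψ δ) {K₁ L η xh : ℝ}
    (hxh : xh ∈ Crit ψ) (hr : 0 < K₁⁻¹ * L ^ η) (hδ : 3 * (K₁⁻¹ * L ^ η) < δ)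
    (hhalf : 4 * (K₁⁻¹ * L ^ η) ≤ 1) :
    connectedComponentIn (Bset ψ K₁ L η) xh ⊆
      Icc (xh - 2 * (K₁⁻¹ * L ^ η)) (xh + 2 * (K₁⁻¹ * L ^ η)) := by
  set r := K₁⁻¹ * L ^ η
  have hnot : ∀ s, |s| = 2 * r → xh + s ∉ Bset ψ K₁ L η := fun s hs hmem =>
    (lt_dS1Set_crit hsep hxh hr hδ (by rw [dS1_add_self (by linarith) xh, hs])).not_ge hmem
  refine connectedComponentIn_subset_Icc (by linarith) ?_ (hnot _ (abs_of_pos (by linarith)))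
  rw [sub_eq_add_neg]
  exact hnot _ (by rw [abs_neg, abs_of_pos (by linarith)])

end CriticalNeighbourhood

section Calculus

variable {f : ℝ → ℝ} {C : ℝ}

lemma abs_sub_le_of_abs_deriv_le (hf : Differentiable ℝ f) (hC : ∀ x, |deriv f x| ≤ C)
    (x y : ℝ) : |f x - f y| ≤ C * |x - y| :=
  convex_univ.norm_image_sub_le_of_norm_deriv_le (fun z _ => hf z) (fun z _ => hC z)
    (mem_univ y) (mem_univ x)

lemma abs_sub_le_mul_sq_of_deriv_eq_zero (hf : Differentiable ℝ f)
    (hf' : Differentiable ℝ (deriv f)) (hC : ∀ x, |deriv (deriv f) x| ≤ C) {x : ℝ}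
    (hx : deriv f x = 0) (z : ℝ) : |f z - f x| ≤ C * (z - x) ^ 2 := by
  have hC0 : 0 ≤ C := (abs_nonneg _).trans (hC x)
  have hderiv : ∀ t ∈ uIcc x z, ‖deriv f t‖ ≤ C * |z - x| := fun t ht => by
    simpa [hx] using (abs_sub_le_of_abs_deriv_le hf' hC t x).trans
      (mul_le_mul_of_nonneg_left (abs_sub_left_of_mem_uIcc ht) hC0)
  calc |f z - f x| ≤ C * |z - x| * |z - x| :=
        (convex_uIcc x z).norm_image_sub_le_of_norm_deriv_le (fun t _ => hf t) hderiv
          left_mem_uIcc right_mem_uIcc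
    _ = C * (z - x) ^ 2 := by rw [mul_assoc, ← sq, sq_abs]

lemma abs_sub_le_mul_dS1 (hper : Function.Periodic f 1) (hf : Differentiable ℝ f)
    (hC : ∀ x, |deriv f x| ≤ C) (x y : ℝ) :
    |f x - f y| ≤ C * dS1 x y := by
  have := abs_sub_le_of_abs_deriv_le hf hC (x - round (x - y) * 1) y
  rwa [hper.sub_int_mul_eq, mul_one, sub_right_comm] at this

lemma abs_sub_le_mul_dS1_sq (hper : Function.Periodic f 1) (hf : Differentiable ℝ f)
    (hf' : Differentiable ℝ (deriv f)) (hC : ∀ x, |deriv (deriv f) x| ≤ C) {x : ℝ}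
    (hx : deriv f x = 0) (z : ℝ) :
    |f z - f x| ≤ C * dS1 z x ^ 2 := by
  have := abs_sub_le_mul_sq_of_deriv_eq_zero hf hf' hC hx (z - round (z - x) * 1)
  rwa [hper.sub_int_mul_eq, mul_one, sub_right_comm, ← sq_abs] at this

lemma differentiable_deriv_of_contDiff_two (hf : ContDiff ℝ 2 f) : Differentiable ℝ (deriv f) :=
  ((contDiff_succ_iff_deriv (n := 1)).1 hf).2.2.differentiable one_ne_zero

end Calculus

lemma dS1_cmap_le (ψ : ℝ → ℝ) {L : ℝ} (hL : 0 ≤ L) (a u v : ℝ) :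
    dS1 (cmap ψ L a u) (cmap ψ L a v) ≤ L * |ψ u - ψ v| := by
  rw [cmap, cmap, dS1_fract_left, dS1_comm, dS1_fract_left, dS1_comm]
  calc _ ≤ |L * ψ u + a - (L * ψ v + a)| := dS1_le_abs_sub _ _
    _ = L * |ψ u - ψ v| := by rw [add_sub_add_right_eq_sub, ← mul_sub, abs_mul, abs_of_nonneg hL]

lemma le_pow_mul_of_le_mul_add {d : ℕ → ℝ} {q ε A : ℝ} (hq : 1 ≤ 2 * q) (hε : 0 ≤ ε)
    (hεA : ε ≤ A) (h0 : d 0 ≤ A) (hstep : ∀ j, d (j + 1) ≤ q * (d j + ε)) (j : ℕ) :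
    d j ≤ (2 * q) ^ j * A := by
  induction j with
  | zero => simpa using h0
  | succ j ih =>
    have hεj : ε ≤ (2 * q) ^ j * A :=
      hεA.trans (le_mul_of_one_le_left (by linarith) (one_le_pow₀ hq))
    calc d (j + 1) ≤ q * (d j + ε) := hstep j
      _ ≤ q * ((2 * q) ^ j * A + (2 * q) ^ j * A) := by gcongr; linarith
      _ = (2 * q) ^ (j + 1) * A := by ring

section Orbit

variable {ψ : ℝ → ℝ} {L a ε : ℝ} {ω : ℕ → ℝ}

lemma dS1_orbitW_succ_le (hper : Function.Periodic ψ 1) (hd : Differentiable ℝ ψ) (hH4 : H4 ψ)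
    (hL : 0 ≤ L) (hω : ∀ i, |ω i| ≤ ε) (y xh : ℝ) (j : ℕ) :
    dS1 (orbitW ψ L a ω y (j + 1)) (detIter ψ L a xh (j + 1)) ≤
      L / 10 * (dS1 (orbitW ψ L a ω y j) (detIter ψ L a xh j) + ε) := by
  set X := orbitW ψ L a ω y j
  set Y := detIter ψ L a xh j
  calc dS1 (orbitW ψ L a ω y (j + 1)) (detIter ψ L a xh (j + 1))
      = dS1 (cmap ψ L a (X + ω j)) (cmap ψ L a Y) := by
        simp only [detIter, orbitW, add_zero]; rfl
    _ ≤ L * (1 / 10 * dS1 (X + ω j) Y) :=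
        (dS1_cmap_le ψ hL a _ _).trans (by gcongr; exact abs_sub_le_mul_dS1 hper hd hH4.1 _ _)
    _ ≤ L * (1 / 10 * (dS1 X Y + ε)) := by
        gcongr; exact (dS1_add_left_le _ _ _).trans (by gcongr; exact hω j)
    _ = L / 10 * (dS1 X Y + ε) := by ring

lemma dS1_orbitW_one_le (hper : Function.Periodic ψ 1) (hψ2 : ContDiff ℝ 2 ψ) (hH4 : H4 ψ)
    (hL : 0 ≤ L) (hω : ∀ i, |ω i| ≤ ε) {xh : ℝ} (hxh : xh ∈ Crit ψ) (y : ℝ) :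
    dS1 (orbitW ψ L a ω y 1) (detIter ψ L a xh 1) ≤ L / 10 * (dS1 y xh + ε) ^ 2 := by
  have hsq := abs_sub_le_mul_dS1_sq hper (hψ2.differentiable (by norm_num))
    (differentiable_deriv_of_contDiff_two hψ2) hH4.2 hxh (y + ω 0)
  calc dS1 (orbitW ψ L a ω y 1) (detIter ψ L a xh 1)
      = dS1 (cmap ψ L a (y + ω 0)) (cmap ψ L a xh) := by
        simp only [detIter, orbitW, add_zero]
    _ ≤ L * (1 / 10 * dS1 (y + ω 0) xh ^ 2) := (dS1_cmap_le ψ hL a _ _).trans (by gcongr)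
    _ ≤ L * (1 / 10 * (dS1 y xh + ε) ^ 2) := by
        gcongr
        · exact dS1_nonneg _ _
        · exact (dS1_add_left_le _ _ _).trans (by gcongr; exact hω 0)
    _ = L / 10 * (dS1 y xh + ε) ^ 2 := by ring

lemma dS1_orbitW_le (hper : Function.Periodic ψ 1) (hψ2 : ContDiff ℝ 2 ψ) (hH4 : H4 ψ)
    (hL : 5 ≤ L) (hε : 0 ≤ ε) (hω : ∀ i, |ω i| ≤ ε) {xh : ℝ} (hxh : xh ∈ Crit ψ) (y : ℝ)
    (j : ℕ) :
    dS1 (orbitW ψ L a ω y (j + 1)) (detIter ψ L a xh (j + 1)) ≤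
      (L / 5) ^ j * (L / 10 * (dS1 y xh + ε) ^ 2 + ε) := by
  have := le_pow_mul_of_le_mul_add
    (d := fun j => dS1 (orbitW ψ L a ω y (j + 1)) (detIter ψ L a xh (j + 1)))
    (by linarith) hε (le_add_of_nonneg_left (by positivity))
    ((dS1_orbitW_one_le hper hψ2 hH4 (by linarith) hω hxh y).trans (le_add_of_nonneg_right hε))
    (fun j => dS1_orbitW_succ_le hper (hψ2.differentiable (by norm_num)) hH4 (by linarith) hω
      y xh (j + 1)) j
  rwa [show 2 * (L / 10) = L / 5 by ring] at this

end Orbit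

lemma le_rpow_of_lt_rpow_neg_max {L ε β : ℝ} {k l : ℕ} (hL : 1 ≤ L) (hβ : 0 ≤ β) (hl : 1 ≤ l)
    (hlk : l ≤ k) (hε : ε < L ^ (-max ((k : ℝ) - 1) (1 / 2) - β)) :
    ε ≤ L ^ (-((l : ℝ) + β) / 2) ∧ ε ≤ L ^ (-((l : ℝ) - 1) - β) := by
  have hlR : (1 : ℝ) ≤ l := by exact_mod_cast hl
  have hlkR : (l : ℝ) ≤ k := by exact_mod_cast hlk
  have hhalf : (l : ℝ) / 2 ≤ max ((k : ℝ) - 1) (1 / 2) := by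
    rcases Nat.lt_or_ge k 2 with hk | hk
    · have : l = 1 := by omega
      simp [this]
    · have : (2 : ℝ) ≤ k := by exact_mod_cast hk
      exact le_max_of_le_left (by linarith)
  constructor <;> refine hε.le.trans (Real.rpow_le_rpow_of_exponent_le hL ?_)
  · linarith
  · linarith [le_max_left ((k : ℝ) - 1) (1 / 2)]

lemma pow_mul_sq_add_le_rpow {L K β ε d : ℝ} {l j : ℕ} (hL : 5 ≤ L)
    (hjl : j + 1 ≤ l) (hε : 0 ≤ ε) (hεη : ε ≤ L ^ (-((l : ℝ) + β) / 2))
    (hεl : ε ≤ L ^ (-((l : ℝ) - 1) - β)) (hd0 : 0 ≤ d)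
    (hd : d ≤ 2 * (K * L ^ (-((l : ℝ) + β) / 2)))
    (hc : (2 * K + 1) ^ 2 / 10 + 1 ≤ L ^ (β / 2)) :
    (L / 5) ^ j * (L / 10 * (d + ε) ^ 2 + ε) ≤ L ^ (-β / 2) := by
  have hL0 : 0 < L := by linarith
  set u := L ^ (-((l : ℝ) + β) / 2)
  have hpow : (L / 5) ^ j ≤ L ^ ((l : ℝ) - 1) := by
    rw [show (l : ℝ) - 1 = ((l - 1 : ℕ) : ℝ) by push_cast [Nat.cast_sub (by omega : 1 ≤ l)]; ring,
      Real.rpow_natCast]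
    calc (L / 5) ^ j ≤ L ^ j := by gcongr; linarith
      _ ≤ L ^ (l - 1) := pow_le_pow_right₀ (by linarith) (by omega)
  have hsq : L ^ ((l : ℝ) - 1) * L * u ^ 2 = L ^ (-β) := by
    rw [show -β = (l : ℝ) - 1 + 1 + (-((l : ℝ) + β) / 2 + -((l : ℝ) + β) / 2) by ring,
      Real.rpow_add hL0, Real.rpow_add hL0, Real.rpow_add hL0, Real.rpow_one, sq]
  have heps : L ^ ((l : ℝ) - 1) * L ^ (-((l : ℝ) - 1) - β) = L ^ (-β) := by
    rw [← Real.rpow_add hL0]; congr 1; ring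
  have hhalf : L ^ (β / 2) * L ^ (-β) = L ^ (-β / 2) := by
    rw [← Real.rpow_add hL0]; congr 1; ring
  calc (L / 5) ^ j * (L / 10 * (d + ε) ^ 2 + ε)
      ≤ L ^ ((l : ℝ) - 1) * (L / 10 * ((2 * K + 1) * u) ^ 2 + L ^ (-((l : ℝ) - 1) - β)) := by
        gcongr; linarith
    _ = (2 * K + 1) ^ 2 / 10 * (L ^ ((l : ℝ) - 1) * L * u ^ 2) +
          L ^ ((l : ℝ) - 1) * L ^ (-((l : ℝ) - 1) - β) := by ring
    _ = ((2 * K + 1) ^ 2 / 10 + 1) * L ^ (-β) := by rw [hsq, heps]; ring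
    _ ≤ L ^ (-β / 2) := by
        rw [← hhalf]; gcongr

lemma eventually_bound_period_thresholds {K δ β : ℝ} (hδ : 0 < δ) (hβ : 0 < β) :
    ∀ᶠ L in atTop, 5 ≤ L ∧ 3 * (K * L ^ (-(1 : ℝ) / 2)) < δ ∧
      4 * (K * L ^ (-(1 : ℝ) / 2)) ≤ 1 ∧ (2 * K + 1) ^ 2 / 10 + 1 ≤ L ^ (β / 2) := by
  have hsmall : Tendsto (fun L : ℝ => K * L ^ (-(1 : ℝ) / 2)) atTop (𝓝 0) := by
    have := (tendsto_rpow_neg_atTop (by norm_num : (0 : ℝ) < 1 / 2)).const_mul K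
    rw [mul_zero] at this
    simpa only [neg_div] using this
  filter_upwards [eventually_ge_atTop 5, hsmall.eventually_lt_const (by positivity : 0 < δ / 3),
    hsmall.eventually_le_const (by norm_num : (0 : ℝ) < 1 / 4),
    (tendsto_rpow_atTop (by positivity : 0 < β / 2)).eventually_ge_atTop _] with L h5 h3 h4 hc
  exact ⟨h5, by linarith, by linarith, hc⟩

/-- **Lemma 2.2** (bound periods).  There is `L₀ = L₀(β,ψ)` such that for all `L ≥ L₀`, all
`k ∈ ℕ` and all `0 < ε < L^{-max{k-1,1/2}-β}`: if `1 ≤ l ≤ k`, `ω` is any sample, `J₀` is a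
connected component of `B(-(l+β)/2)` and `xh` is the unique critical point in `J₀`, then
`f^i_ω(J₀) ⊆ {d(·, f^i(xh)) ≤ L^{-β/2}}` for all `1 ≤ i ≤ l`. -/
theorem lemma_boundPeriod (ψ : ℝ → ℝ) (hψ : PsiReg ψ) (hH4 : H4 ψ)
    (K₁ : ℝ) (hK1 : K1hyp ψ K₁) (β : ℝ) (hβ : β ∈ Ioo (0:ℝ) (1 / 100)) :
    ∃ L₀ : ℝ, 0 < L₀ ∧ ∀ L : ℝ, L₀ ≤ L → ∀ a ∈ Ico (0:ℝ) 1, ∀ k : ℕ, 1 ≤ k →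
      ∀ ε : ℝ, 0 < ε → ε < L ^ (-(max ((k : ℝ) - 1) (1 / 2)) - β) →
        ∀ l : ℕ, 1 ≤ l → l ≤ k →
          ∀ ω : ℕ → ℝ, (∀ i, |ω i| ≤ ε) →
            ∀ J₀ : Set ℝ, ∀ xh : ℝ, xh ∈ J₀ →
              J₀ = connectedComponentIn (Bset ψ K₁ L (-((l : ℝ) + β) / 2)) xh →
              Crit ψ ∩ J₀ = {xh} →
              ∀ i : ℕ, 1 ≤ i → i ≤ l → ∀ y ∈ J₀,
                dS1 (orbitW ψ L a ω y i) (detIter ψ L a xh i) ≤ L ^ (-β / 2) := by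
  obtain ⟨hper, hψ2, hH1, -⟩ := hψ
  obtain ⟨δ, hδ, hsep⟩ := exists_critSeparated hper.deriv hH1
  obtain ⟨L₀, hL₀⟩ :=
    eventually_atTop.1 (eventually_bound_period_thresholds (K := K₁⁻¹) hδ hβ.1)
  refine ⟨max L₀ 1, by positivity, fun L hL a _ k _ ε hε hεk l hl hlk ω hω J₀ xh _ hJ hcrit i
    hi hil y hy => ?_⟩
  obtain ⟨hL5, hr3, hr4, hc⟩ := hL₀ L (le_of_max_le_left hL)
  obtain ⟨j, rfl⟩ := Nat.exists_eq_add_of_le' hi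
  have hxh : xh ∈ Crit ψ := (hcrit.ge (mem_singleton xh)).1
  have hr : K₁⁻¹ * L ^ (-((l : ℝ) + β) / 2) ≤ K₁⁻¹ * L ^ (-(1 : ℝ) / 2) := by
    have : (1 : ℝ) ≤ l := by exact_mod_cast hl
    gcongr
    · exact inv_nonneg.2 hK1.1.le
    · linarith
    · linarith [hβ.1]
  have hr0 : 0 < K₁⁻¹ * L ^ (-((l : ℝ) + β) / 2) := by have := hK1.1; positivity
  have hyxh := (hJ ▸ connectedComponentIn_Bset_subset_Icc hsep hxh hr0 (by linarith)
    (by linarith)) hy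
  obtain ⟨hεη, hεl⟩ := le_rpow_of_lt_rpow_neg_max (by linarith) hβ.1.le hl hlk hεk
  refine (dS1_orbitW_le hper hψ2 hH4 hL5 hε.le hω hxh y j).trans
    (pow_mul_sq_add_le_rpow hL5 hil hε.le hεη hεl ?_ ?_ hc)
  · exact dS1_nonneg y xh
  · exact (dS1_le_abs_sub y xh).trans
      (abs_sub_le_iff.2 ⟨by linarith [hyxh.2], by linarith [hyxh.1]⟩)
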